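/- arXiv:1111.0029 — 2 statements merged into one kernel-verified Lean document; each statement's English description precedes it below -/
import Mathlib

section
/- (Morse Lemma) Let X be a proper δ-hyperbolic geodesic metric space, and fix K ≥ 1, ε ≥ 0. Then there is a constant C = C(K, ε, δ) such that any (K, ε) quasigeodesic segment γ in X lies within Hausdorff distance C of the geodesic segment joining its endpoints. -/
/-- `γ` restricted to `[a,b]` is a geodesic (isometric embedding of the interval). -/
def IsGeodesicOn {X : Type*} [MetricSpace X] (γ : ℝ → X) (a b : ℝ) : Prop :=
  ∀ s ∈ Set.Icc a b, ∀ t ∈ Set.Icc a b, dist (γ s) (γ t) = |s - t|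

/-- `γ` is a geodesic segment from `x` to `y`, parameterized by arclength on
`[0, dist x y]`. -/
def GeodesicFromTo {X : Type*} [MetricSpace X] (γ : ℝ → X) (x y : X) : Prop :=
  γ 0 = x ∧ γ (dist x y) = y ∧ IsGeodesicOn γ 0 (dist x y)

/-- A geodesic metric space: any two points are joined by a geodesic. -/
def GeodesicSpace (X : Type*) [MetricSpace X] : Prop :=
  ∀ x y : X, ∃ γ : ℝ → X, GeodesicFromTo γ x y

/-- `X` is δ-hyperbolic: every geodesic triangle is δ-thin, i.e. each side is in the
δ-neighborhood of the union of the other two sides. -/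
def DeltaHyperbolic (X : Type*) [MetricSpace X] (δ : ℝ) : Prop :=
  ∀ (x y z : X) (γ₁ γ₂ γ₃ : ℝ → X),
    GeodesicFromTo γ₁ x y → GeodesicFromTo γ₂ y z → GeodesicFromTo γ₃ z x →
    ∀ t ∈ Set.Icc (0 : ℝ) (dist x y),
      (∃ s ∈ Set.Icc (0 : ℝ) (dist y z), dist (γ₁ t) (γ₂ s) ≤ δ) ∨
      (∃ s ∈ Set.Icc (0 : ℝ) (dist z x), dist (γ₁ t) (γ₃ s) ≤ δ)

/-- Dyadic thinness: a point on a geodesic joining the ends of a chain of `n ≤ 2^N`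
points with edges `≤ L` is within `δ*N + L` of some chain point. -/
lemma chain_thin {X : Type*} [MetricSpace X] {δ L : ℝ} (hL : 0 ≤ L)
    (hgeo : GeodesicSpace X) (hhyp : DeltaHyperbolic X δ) :
    ∀ (N n : ℕ), n ≤ 2 ^ N → ∀ c : ℕ → X, (∀ i < n, dist (c i) (c (i + 1)) ≤ L) →
      ∀ σ : ℝ → X, GeodesicFromTo σ (c 0) (c n) →
        ∀ s ∈ Set.Icc (0 : ℝ) (dist (c 0) (c n)),
          ∃ i ≤ n, dist (σ s) (c i) ≤ δ * N + L := by
  intro N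
  induction N with
  | zero =>
    intro n hn c hc σ hσ s hs
    simp only [pow_zero] at hn
    interval_cases n
    · refine ⟨0, le_refl _, ?_⟩
      have h0 : dist (c 0) (c 0) = 0 := dist_self _
      have hs0 : s = 0 := le_antisymm (h0 ▸ hs.2) hs.1
      rw [hs0, hσ.1]
      simp [hL]
    · refine ⟨0, Nat.zero_le _, ?_⟩
      have hd : dist (σ s) (σ 0) = |s - 0| :=
        hσ.2.2 s hs 0 ⟨le_refl 0, dist_nonneg⟩
      rw [hσ.1] at hd
      have h1 := hc 0 one_pos
      have : dist (σ s) (c 0) = s := by rw [hd]; rw [abs_of_nonneg (by linarith [hs.1])]; ring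
      simp only [Nat.cast_zero, mul_zero, zero_add]
      rw [this]
      exact le_trans hs.2 h1
  | succ N ih =>
    intro n hn c hc σ hσ s hs
    set m := n / 2 with hm
    have hn2 : n ≤ 2 * 2 ^ N := by rw [pow_succ] at hn; omega
    have hm1 : m ≤ 2 ^ N := by omega
    have hm2 : n - m ≤ 2 ^ N := by omega
    obtain ⟨g₂, hg₂⟩ := hgeo (c n) (c m)
    obtain ⟨g₃, hg₃⟩ := hgeo (c m) (c 0)
    rcases hhyp (c 0) (c n) (c m) σ g₂ g₃ hσ hg₂ hg₃ s hs with ⟨u, hu, hdu⟩ | ⟨u, hu, hdu⟩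
    · -- point close to geodesic from c n to c m; reverse chain
      set d : ℕ → X := fun i => c (n - i) with hd
      have hd0 : d 0 = c n := by simp [hd]
      have hdnm : d (n - m) = c m := by simp only [hd]; congr 1; omega
      have hedge : ∀ i < n - m, dist (d i) (d (i + 1)) ≤ L := by
        intro i hi
        have e1 : n - (i + 1) + 1 = n - i := by omega
        have := hc (n - (i + 1)) (by omega)
        rw [e1] at this
        simpa [hd, dist_comm] using this
      have hg₂' : GeodesicFromTo g₂ (d 0) (d (n - m)) := by rw [hd0, hdnm]; exact hg₂
      have hu' : u ∈ Set.Icc (0:ℝ) (dist (d 0) (d (n - m))) := by rw [hd0, hdnm]; exact hu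
      obtain ⟨i, hi, hdi⟩ := ih (n - m) hm2 d hedge g₂ hg₂' u hu'
      refine ⟨n - i, by omega, ?_⟩
      push_cast
      calc dist (σ s) (c (n - i)) ≤ dist (σ s) (g₂ u) + dist (g₂ u) (c (n - i)) :=
            dist_triangle _ _ _
        _ ≤ δ + (δ * N + L) := by exact add_le_add hdu (by simpa [hd] using hdi)
        _ = δ * ((N:ℝ) + 1) + L := by ring
    · set d : ℕ → X := fun i => c (m - i) with hd
      have hd0 : d 0 = c m := by simp [hd]
      have hdm : d m = c 0 := by simp only [hd]; congr 1; omega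
      have hedge : ∀ i < m, dist (d i) (d (i + 1)) ≤ L := by
        intro i hi
        have e1 : m - (i + 1) + 1 = m - i := by omega
        have := hc (m - (i + 1)) (by omega)
        rw [e1] at this
        simpa [hd, dist_comm] using this
      have hg₃' : GeodesicFromTo g₃ (d 0) (d m) := by rw [hd0, hdm]; exact hg₃
      have hu' : u ∈ Set.Icc (0:ℝ) (dist (d 0) (d m)) := by rw [hd0, hdm]; exact hu
      obtain ⟨i, hi, hdi⟩ := ih m hm1 d hedge g₃ hg₃' u hu'
      refine ⟨m - i, by omega, ?_⟩
      push_cast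
      calc dist (σ s) (c (m - i)) ≤ dist (σ s) (g₃ u) + dist (g₃ u) (c (m - i)) :=
            dist_triangle _ _ _
        _ ≤ δ + (δ * N + L) := add_le_add hdu (by simpa [hd] using hdi)
        _ = δ * ((N:ℝ) + 1) + L := by ring


lemma subdiv_nat (r : ℝ) (hr : 0 ≤ r) : ∃ m : ℕ, 1 ≤ m ∧ r ≤ m ∧ (m : ℝ) ≤ r + 2 := by
  refine ⟨max 1 ⌈r⌉₊, le_max_left _ _, ?_, ?_⟩
  · calc r ≤ (⌈r⌉₊ : ℝ) := Nat.le_ceil r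
      _ ≤ ((max 1 ⌈r⌉₊ : ℕ) : ℝ) := by exact_mod_cast Nat.le_max_right 1 ⌈r⌉₊
  · have h1 : (⌈r⌉₊ : ℝ) ≤ r + 1 := (Nat.ceil_lt_add_one hr).le
    have : ((max 1 ⌈r⌉₊ : ℕ) : ℝ) = max 1 (⌈r⌉₊ : ℝ) := by push_cast [Nat.cast_max]; rfl
    rw [this]
    exact max_le (by linarith) (by linarith)

/-- Subdivide a geodesic into unit-ish steps. -/
lemma geo_subchain {X : Type*} [MetricSpace X] {g : ℝ → X} {x y : X}
    (hg : GeodesicFromTo g x y) :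
    ∃ (m : ℕ) (c : ℕ → X), 1 ≤ m ∧ (m : ℝ) ≤ dist x y + 2 ∧ c 0 = x ∧ c m = y ∧
      (∀ i < m, dist (c i) (c (i + 1)) ≤ 1) ∧
      (∀ i ≤ m, ∃ u ∈ Set.Icc (0 : ℝ) (dist x y), c i = g u) := by
  set r := dist x y with hrdef
  have hr : 0 ≤ r := dist_nonneg
  obtain ⟨m, hm1, hm2, hm3⟩ := subdiv_nat r hr
  have hmR : (0:ℝ) < m := by exact_mod_cast hm1
  refine ⟨m, fun i => g (i * r / m), hm1, hm3, ?_, ?_, ?_, ?_⟩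
  · simp [hg.1]
  · show g ((m:ℝ) * r / m) = y
    have : (m : ℝ) * r / m = r := by field_simp
    rw [this]; exact hg.2.1
  · intro i hi
    have hparam : ∀ j : ℕ, j ≤ m → (j : ℝ) * r / m ∈ Set.Icc (0:ℝ) r := by
      intro j hj
      constructor
      · positivity
      · rw [div_le_iff₀ hmR]
        have : (j:ℝ) ≤ m := by exact_mod_cast hj
        nlinarith
    have := hg.2.2 _ (hparam i hi.le) _ (hparam (i+1) hi)
    rw [this]
    have hir : |(i:ℝ) * r / m - (i+1:ℕ) * r / m| = r / m := by
      push_cast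
      rw [abs_of_nonpos (by rw [div_sub_div_same]; apply div_nonpos_of_nonpos_of_nonneg <;> nlinarith)]
      field_simp
      ring
    rw [hir, div_le_one hmR]
    exact hm2
  · intro i hi
    refine ⟨i * r / m, ⟨by positivity, ?_⟩, rfl⟩
    rw [div_le_iff₀ hmR]
    have : (i:ℝ) ≤ m := by exact_mod_cast hi
    nlinarith

/-- Subdivide a quasigeodesic between two parameters into steps of length ≤ K + ε. -/
lemma qg_subchain {X : Type*} [MetricSpace X] {γ : ℝ → X} {a b K ε : ℝ} (hK : 0 ≤ K)
    (hqg : ∀ s ∈ Set.Icc a b, ∀ t ∈ Set.Icc a b, dist (γ s) (γ t) ≤ K * |s - t| + ε)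
    {t₁ t₂ : ℝ} (ht₁ : t₁ ∈ Set.Icc a b) (ht₂ : t₂ ∈ Set.Icc a b) :
    ∃ (m : ℕ) (c : ℕ → X), 1 ≤ m ∧ (m : ℝ) ≤ |t₂ - t₁| + 2 ∧ c 0 = γ t₁ ∧ c m = γ t₂ ∧
      (∀ i < m, dist (c i) (c (i + 1)) ≤ K + ε) ∧
      (∀ i ≤ m, ∃ u ∈ Set.Icc a b, c i = γ u) := by
  obtain ⟨m, hm1, hm2, hm3⟩ := subdiv_nat |t₂ - t₁| (abs_nonneg _)
  have hmR : (0:ℝ) < m := by exact_mod_cast hm1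
  have hparam : ∀ j : ℕ, j ≤ m → t₁ + j * (t₂ - t₁) / m ∈ Set.Icc a b := by
    intro j hj
    have hθ0 : (0:ℝ) ≤ (j:ℝ) / m := by positivity
    have hθ1 : (j:ℝ) / m ≤ 1 := by
      rw [div_le_one hmR]; exact_mod_cast hj
    have heq : t₁ + j * (t₂ - t₁) / m = (1 - (j:ℝ)/m) * t₁ + ((j:ℝ)/m) * t₂ := by
      field_simp; ring
    rw [heq]
    constructor
    · nlinarith [ht₁.1, ht₂.1]
    · nlinarith [ht₁.2, ht₂.2]
  refine ⟨m, fun i => γ (t₁ + i * (t₂ - t₁) / m), hm1, hm3, by simp, ?_, ?_, ?_⟩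
  · show γ (t₁ + (m:ℝ) * (t₂ - t₁) / m) = γ t₂
    have : t₁ + (m:ℝ) * (t₂ - t₁) / m = t₂ := by field_simp; ring
    rw [this]
  · intro i hi
    have h := hqg _ (hparam i hi.le) _ (hparam (i+1) hi)
    have habs : |t₁ + (i:ℝ) * (t₂ - t₁) / m - (t₁ + ((i:ℕ)+1:ℕ) * (t₂ - t₁) / m)| =
        |t₂ - t₁| / m := by
      push_cast
      rw [show t₁ + (i:ℝ) * (t₂ - t₁) / m - (t₁ + ((i:ℝ)+1) * (t₂ - t₁) / m)
          = -((t₂ - t₁) / m) by ring]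
      rw [abs_neg, abs_div, abs_of_pos hmR]
    refine h.trans ?_
    rw [habs]
    have : |t₂ - t₁| / m ≤ 1 := by rw [div_le_one hmR]; exact hm2
    nlinarith
  · intro i hi
    exact ⟨_, hparam i hi, rfl⟩

def chainAppend {X : Type*} (m : ℕ) (c d : ℕ → X) : ℕ → X :=
  fun i => if i < m then c i else d (i - m)

lemma chainAppend_zero {X : Type*} (m : ℕ) (c d : ℕ → X) (hm : 1 ≤ m) :
    chainAppend m c d 0 = c 0 := by
  simp only [chainAppend]; rw [if_pos (by omega)]

lemma chainAppend_last {X : Type*} (m k : ℕ) (c d : ℕ → X) :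
    chainAppend m c d (m + k) = d k := by
  simp only [chainAppend]
  rw [if_neg (by omega)]
  congr 1; omega

lemma chainAppend_edges {X : Type*} [MetricSpace X] {m k : ℕ} {c d : ℕ → X} {L : ℝ}
    (hcd : c m = d 0)
    (hc : ∀ i < m, dist (c i) (c (i + 1)) ≤ L)
    (hd : ∀ i < k, dist (d i) (d (i + 1)) ≤ L) :
    ∀ i < m + k, dist (chainAppend m c d i) (chainAppend m c d (i + 1)) ≤ L := by
  intro i hi
  simp only [chainAppend]
  by_cases h1 : i + 1 < m
  · rw [if_pos (by omega), if_pos h1]; exact hc i (by omega)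
  · by_cases h2 : i < m
    · have e : i + 1 = m := by omega
      rw [if_pos h2, if_neg (by omega), show i + 1 - m = 0 by omega, ← hcd, ← e]
      exact hc i h2
    · rw [if_neg h2, if_neg (by omega)]
      have e : i + 1 - m = (i - m) + 1 := by omega
      rw [e]
      exact hd (i - m) (by omega)

lemma chainAppend_cases {X : Type*} (m k : ℕ) (c d : ℕ → X) :
    ∀ i, (i ≤ m ∧ chainAppend m c d i = c i) ∨ (m ≤ i ∧ chainAppend m c d i = d (i - m)) := by
  intro i
  simp only [chainAppend]
  by_cases h : i < m
  · exact Or.inl ⟨h.le, by rw [if_pos h]⟩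
  · exact Or.inr ⟨by omega, by rw [if_neg h]⟩


open Filter Asymptotics Real

/-- linear beats logarithm, explicit eventual bound form. -/
lemma exists_threshold (c A B L : ℝ) (hA : 0 < A) :
    ∃ M : ℝ, 0 ≤ M ∧ ∀ x ≥ M, c * Real.logb 2 (A * x + B) + L < x := by
  have htend : Tendsto (fun x : ℝ => A * x + B) atTop atTop :=
    (tendsto_id.const_mul_atTop hA).atTop_add tendsto_const_nhds
  have hbig : (fun x : ℝ => A * x + B) =O[atTop] (id : ℝ → ℝ) := by
    rw [Asymptotics.isBigO_iff]
    refine ⟨A + |B|, ?_⟩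
    filter_upwards [eventually_ge_atTop (1:ℝ)] with x hx
    have : |A * x + B| ≤ A * x + |B| := by
      calc |A * x + B| ≤ |A * x| + |B| := abs_add_le _ _
        _ = A * x + |B| := by rw [abs_of_nonneg (by nlinarith)]
    simp only [Real.norm_eq_abs, id]
    calc |A * x + B| ≤ A * x + |B| := this
      _ ≤ (A + |B|) * x := by nlinarith [abs_nonneg B]
      _ ≤ (A + |B|) * |x| := by nlinarith [abs_nonneg B, le_abs_self x]
  have h1 : (fun x : ℝ => Real.log (A * x + B)) =o[atTop] (id : ℝ → ℝ) :=
    (Real.isLittleO_log_id_atTop.comp_tendsto htend).trans_isBigO hbig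
  have h2 : (fun x : ℝ => (c / Real.log 2) * Real.log (A * x + B)) =o[atTop] (id : ℝ → ℝ) :=
    h1.const_mul_left _
  have h3 := h2.def one_half_pos
  rw [Filter.eventually_atTop] at h3
  obtain ⟨M₀, hM₀⟩ := h3
  refine ⟨max M₀ (max 1 (2 * L + 2)), le_trans (by norm_num) (le_max_right _ _), ?_⟩
  intro x hx
  have hx1 : (1:ℝ) ≤ x := le_trans ((le_max_left _ _).trans (le_max_right _ _)) hx
  have hxL : 2 * L + 2 ≤ x := le_trans ((le_max_right _ _).trans (le_max_right _ _)) hx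
  have hb := hM₀ x (le_trans (le_max_left _ _) hx)
  simp only [Real.norm_eq_abs, id] at hb
  have hxabs : |x| = x := abs_of_nonneg (by linarith)
  rw [hxabs] at hb
  have key : c * Real.logb 2 (A * x + B) = (c / Real.log 2) * Real.log (A * x + B) := by
    rw [Real.logb]; ring
  rw [key]
  have := le_abs_self ((c / Real.log 2) * Real.log (A * x + B))
  linarith

lemma clog_le_logb (n : ℕ) (hn : 1 ≤ n) : (Nat.clog 2 n : ℝ) ≤ Real.logb 2 n + 1 := by
  by_cases h0 : Nat.clog 2 n = 0
  · rw [h0]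
    have : (0:ℝ) ≤ Real.logb 2 n := Real.logb_nonneg one_lt_two (by exact_mod_cast hn)
    push_cast; linarith
  · have hn1 : 1 < n := by
      by_contra h
      have : n = 1 := by omega
      rw [this] at h0; simp [Nat.clog] at h0
    have hp := Nat.pow_pred_clog_lt_self (b := 2) one_lt_two hn1
    have hcast : ((2:ℕ) ^ (Nat.clog 2 n - 1) : ℝ) ≤ n := by exact_mod_cast hp.le
    have h2 : ((2:ℝ) ^ (Nat.clog 2 n - 1) : ℝ) ≤ n := by push_cast at hcast ⊢; exact hcast
    have hlb : Real.logb 2 ((2:ℝ) ^ (Nat.clog 2 n - 1)) ≤ Real.logb 2 n :=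
      Real.logb_le_logb_of_le one_lt_two (by positivity) h2
    rw [Real.logb_pow, Real.logb_self_eq_one one_lt_two, mul_one] at hlb
    have hc1 : 1 ≤ Nat.clog 2 n := Nat.one_le_iff_ne_zero.mpr h0
    have : ((Nat.clog 2 n - 1 : ℕ) : ℝ) = (Nat.clog 2 n : ℝ) - 1 := by
      push_cast [Nat.cast_sub hc1]; ring
    rw [this] at hlb
    linarith


set_option maxHeartbeats 1000000 in
lemma geodesic_near_qg {X : Type*} [MetricSpace X] {δ K ε M : ℝ}
    (hδ : 0 ≤ δ) (hK : 1 ≤ K) (hε : 0 ≤ ε)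
    (hgeo : GeodesicSpace X) (hhyp : DeltaHyperbolic X δ)
    (hM : ∀ x ≥ M, δ * Real.logb 2 ((6*K+2) * x + (K*(2+ε)+8)) + (δ + (K+ε+1) + 1) < x)
    (a b : ℝ) (γ σ : ℝ → X) (hab : a ≤ b)
    (hqg : ∀ s ∈ Set.Icc a b, ∀ t ∈ Set.Icc a b,
      K⁻¹ * |s - t| - ε ≤ dist (γ s) (γ t) ∧ dist (γ s) (γ t) ≤ K * |s - t| + ε)
    (hσ : GeodesicFromTo σ (γ a) (γ b)) :
    ∀ s ∈ Set.Icc (0:ℝ) (dist (γ a) (γ b)), ∃ t ∈ Set.Icc a b, dist (σ s) (γ t) ≤ M + 1 := by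
  have hK0 : (0:ℝ) < K := lt_of_lt_of_le one_pos hK
  set d := dist (γ a) (γ b) with hd
  have hd0 : 0 ≤ d := dist_nonneg
  set S := γ '' Set.Icc a b with hS
  have hSne : S.Nonempty := ⟨γ a, a, ⟨le_refl a, hab⟩, rfl⟩
  set f : ℝ → ℝ := fun s => Metric.infDist (σ s) S with hf
  have hσd : ∀ u ∈ Set.Icc (0:ℝ) d, ∀ v ∈ Set.Icc (0:ℝ) d, dist (σ u) (σ v) = |u - v| :=
    hσ.2.2
  have hfb : ∀ s ∈ Set.Icc (0:ℝ) d, f s ≤ s := by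
    intro s hs
    calc f s ≤ dist (σ s) (γ a) :=
          Metric.infDist_le_dist_of_mem ⟨a, ⟨le_refl a, hab⟩, rfl⟩
      _ = dist (σ s) (σ 0) := by rw [hσ.1]
      _ = |s - 0| := hσd s hs 0 ⟨le_refl 0, hd0⟩
      _ = s := by rw [sub_zero, abs_of_nonneg hs.1]
  have hbdd : BddAbove (f '' Set.Icc (0:ℝ) d) := by
    refine ⟨d, ?_⟩
    rintro y ⟨s, hs, rfl⟩
    exact (hfb s hs).trans hs.2
  have hne : (f '' Set.Icc (0:ℝ) d).Nonempty := ⟨f 0, 0, ⟨le_refl 0, hd0⟩, rfl⟩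
  set R := sSup (f '' Set.Icc (0:ℝ) d) with hR
  have hfR : ∀ s ∈ Set.Icc (0:ℝ) d, f s ≤ R := fun s hs =>
    le_csSup hbdd ⟨s, hs, rfl⟩
  have hR0 : 0 ≤ R :=
    le_trans Metric.infDist_nonneg (hfR 0 ⟨le_refl 0, hd0⟩)
  -- main claim
  have hRM : R ≤ M := by
    by_contra hMR
    push_neg at hMR
    obtain ⟨y, ⟨s₀, hs₀, rfl⟩, hDgt⟩ :=
      exists_lt_of_lt_csSup hne (show R - 1 < R by linarith)
    set p := σ s₀ with hp
    have hpS : ∀ q ∈ S, R - 1 ≤ dist p q := fun q hq =>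
      le_trans hDgt.le (Metric.infDist_le_dist_of_mem hq)
    set sy := max (s₀ - 2*R) 0 with hsy
    set sz := min (s₀ + 2*R) d with hsz
    have hsym : sy ∈ Set.Icc (0:ℝ) d :=
      ⟨le_max_right _ _, max_le (le_trans (by linarith) hs₀.2) hd0⟩
    have hszm : sz ∈ Set.Icc (0:ℝ) d :=
      ⟨le_min (by linarith [hs₀.1]) hd0, min_le_right _ _⟩
    have hsys₀ : sy ≤ s₀ := max_le (by linarith) hs₀.1
    have hs₀sz : s₀ ≤ sz := le_min (by linarith) hs₀.2
    have hszsy : sz - sy ≤ 4*R := by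
      have h1 : s₀ - 2*R ≤ sy := le_max_left _ _
      have h2 : sz ≤ s₀ + 2*R := min_le_left _ _
      linarith
    -- left data
    have left : ∃ t₁ ∈ Set.Icc a b, dist (σ sy) (γ t₁) ≤ R + 1 ∧
        ∃ g₁, GeodesicFromTo g₁ (σ sy) (γ t₁) ∧
          ∀ u ∈ Set.Icc (0:ℝ) (dist (σ sy) (γ t₁)), R - 1 ≤ dist p (g₁ u) := by
      by_cases hcl : s₀ - 2*R < 0
      · have hsy0 : sy = 0 := max_eq_right hcl.le
        obtain ⟨g₁, hg₁⟩ := hgeo (σ sy) (γ a)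
        refine ⟨a, ⟨le_refl a, hab⟩, ?_, g₁, hg₁, ?_⟩
        · rw [hsy0, hσ.1, dist_self]; linarith
        · intro u hu
          have h0 : dist (σ sy) (γ a) = 0 := by rw [hsy0, hσ.1, dist_self]
          have hu0 : u = 0 := le_antisymm (h0 ▸ hu.2) hu.1
          rw [hu0, hg₁.1, hsy0, hσ.1]
          exact hpS (γ a) ⟨a, ⟨le_refl a, hab⟩, rfl⟩
      · push_neg at hcl
        have hsyeq : sy = s₀ - 2*R := max_eq_left hcl
        have hfsy : Metric.infDist (σ sy) S < R + 1 :=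
          lt_of_le_of_lt (hfR sy hsym) (by linarith)
        obtain ⟨q, ⟨t₁, ht₁, rfl⟩, hq⟩ := (Metric.infDist_lt_iff hSne).mp hfsy
        obtain ⟨g₁, hg₁⟩ := hgeo (σ sy) (γ t₁)
        refine ⟨t₁, ht₁, hq.le, g₁, hg₁, ?_⟩
        intro u hu
        have hpy : dist p (σ sy) = 2*R := by
          rw [hσd s₀ hs₀ sy hsym, hsyeq, show s₀ - (s₀ - 2*R) = 2*R by ring,
            abs_of_nonneg (by linarith)]
        have h1 : dist (g₁ 0) (g₁ u) = |0 - u| :=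
          hg₁.2.2 0 ⟨le_refl 0, dist_nonneg⟩ u hu
        rw [hg₁.1] at h1
        have h2 : dist (σ sy) (g₁ u) ≤ R + 1 := by
          rw [h1, zero_sub, abs_neg, abs_of_nonneg hu.1]
          exact hu.2.trans hq.le
        have h3 := dist_triangle p (g₁ u) (σ sy)
        rw [dist_comm (g₁ u) (σ sy)] at h3
        linarith
    -- right data
    have right : ∃ t₂ ∈ Set.Icc a b, dist (γ t₂) (σ sz) ≤ R + 1 ∧
        ∃ g₃, GeodesicFromTo g₃ (γ t₂) (σ sz) ∧
          ∀ u ∈ Set.Icc (0:ℝ) (dist (γ t₂) (σ sz)), R - 1 ≤ dist p (g₃ u) := by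
      by_cases hcl : d < s₀ + 2*R
      · have hsz0 : sz = d := min_eq_right hcl.le
        obtain ⟨g₃, hg₃⟩ := hgeo (γ b) (σ sz)
        refine ⟨b, ⟨hab, le_refl b⟩, ?_, g₃, hg₃, ?_⟩
        · rw [hsz0, hσ.2.1, dist_self]; linarith
        · intro u hu
          have h0 : dist (γ b) (σ sz) = 0 := by rw [hsz0, hσ.2.1, dist_self]
          have hu0 : u = 0 := le_antisymm (h0 ▸ hu.2) hu.1
          rw [hu0, hg₃.1]
          exact hpS (γ b) ⟨b, ⟨hab, le_refl b⟩, rfl⟩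
      · push_neg at hcl
        have hszeq : sz = s₀ + 2*R := min_eq_left hcl
        have hfsz : Metric.infDist (σ sz) S < R + 1 :=
          lt_of_le_of_lt (hfR sz hszm) (by linarith)
        obtain ⟨q, ⟨t₂, ht₂, rfl⟩, hq⟩ := (Metric.infDist_lt_iff hSne).mp hfsz
        obtain ⟨g₃, hg₃⟩ := hgeo (γ t₂) (σ sz)
        refine ⟨t₂, ht₂, by rw [dist_comm]; exact hq.le, g₃, hg₃, ?_⟩
        intro u hu
        have hpz : dist p (σ sz) = 2*R := by
          rw [hσd s₀ hs₀ sz hszm, hszeq, show s₀ - (s₀ + 2*R) = -(2*R) by ring,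
            abs_neg, abs_of_nonneg (by linarith)]
        have h1 : dist (g₃ u) (g₃ (dist (γ t₂) (σ sz))) = |u - dist (γ t₂) (σ sz)| :=
          hg₃.2.2 u hu _ ⟨dist_nonneg, le_refl _⟩
        rw [hg₃.2.1] at h1
        have h2 : dist (g₃ u) (σ sz) ≤ R + 1 := by
          rw [h1, abs_of_nonpos (by linarith [hu.2]), neg_sub]
          have : dist (γ t₂) (σ sz) ≤ R + 1 := by rw [dist_comm]; exact hq.le
          linarith [hu.1]
        have h3 := dist_triangle p (g₃ u) (σ sz)
        linarith
    obtain ⟨t₁, ht₁, hℓ₁, g₁, hg₁, hlow₁⟩ := left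
    obtain ⟨t₂, ht₂, hℓ₃, g₃, hg₃, hlow₃⟩ := right
    -- the chains
    obtain ⟨m₁, c₁, hm₁1, hm₁2, hc₁0, hc₁m, hc₁e, hc₁mem⟩ := geo_subchain hg₁
    obtain ⟨m₂, c₂, hm₂1, hm₂2, hc₂0, hc₂m, hc₂e, hc₂mem⟩ :=
      qg_subchain hK0.le (fun s hs t ht => (hqg s hs t ht).2) ht₁ ht₂
    obtain ⟨m₃, c₃, hm₃1, hm₃2, hc₃0, hc₃m, hc₃e, hc₃mem⟩ := geo_subchain hg₃
    set L : ℝ := K + ε + 1 with hLdef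
    have hL0 : 0 ≤ L := by positivity
    set inner := chainAppend m₂ c₂ c₃ with hinner
    set cc := chainAppend m₁ c₁ inner with hcc
    set n := m₁ + (m₂ + m₃) with hn
    have hinner0 : inner 0 = γ t₁ := by rw [hinner, chainAppend_zero _ _ _ hm₂1, hc₂0]
    have hccn : cc n = σ sz := by
      rw [hcc, hn, chainAppend_last, hinner, chainAppend_last, hc₃m]
    have hcc0 : cc 0 = σ sy := by rw [hcc, chainAppend_zero _ _ _ hm₁1, hc₁0]
    have hinneredges : ∀ i < m₂ + m₃, dist (inner i) (inner (i+1)) ≤ L := by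
      apply chainAppend_edges (by rw [hc₂m, hc₃0])
      · intro i hi; exact (hc₂e i hi).trans (by linarith)
      · intro i hi; exact (hc₃e i hi).trans (by linarith)
    have hedges : ∀ i < n, dist (cc i) (cc (i+1)) ≤ L := by
      apply chainAppend_edges (by rw [hc₁m, hinner0])
      · intro i hi; exact (hc₁e i hi).trans (by linarith)
      · exact hinneredges
    -- lower bound on distance from p to every chain point
    have hlow : ∀ i ≤ n, R - 1 ≤ dist p (cc i) := by
      intro i hi
      rcases chainAppend_cases m₁ (m₂ + m₃) c₁ inner i with ⟨hi1, he⟩ | ⟨hi1, he⟩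
      · rw [hcc, he]
        obtain ⟨u, hu, hcu⟩ := hc₁mem i hi1
        rw [hcu]
        exact hlow₁ u hu
      · rw [hcc, he, hinner]
        rcases chainAppend_cases m₂ m₃ c₂ c₃ (i - m₁) with ⟨hi2, he2⟩ | ⟨hi2, he2⟩
        · rw [he2]
          obtain ⟨u, hu, hcu⟩ := hc₂mem (i - m₁) hi2
          rw [hcu]
          exact hpS (γ u) ⟨u, hu, rfl⟩
        · rw [he2]
          obtain ⟨u, hu, hcu⟩ := hc₃mem (i - m₁ - m₂) (by omega)
          rw [hcu]
          exact hlow₃ u hu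
    -- σ' is a geodesic from cc 0 to cc n
    have hdyz : dist (cc 0) (cc n) = sz - sy := by
      rw [hcc0, hccn, hσd sy hsym sz hszm, abs_of_nonpos (by linarith), neg_sub]
    have hgσ' : GeodesicFromTo (fun u => σ (sy + u)) (cc 0) (cc n) := by
      refine ⟨?_, ?_, ?_⟩
      · show σ (sy + 0) = cc 0
        rw [add_zero, hcc0]
      · show σ (sy + dist (cc 0) (cc n)) = cc n
        rw [hdyz, show sy + (sz - sy) = sz by ring, hccn]
      · intro u hu v hv
        rw [hdyz] at hu hv
        show dist (σ (sy + u)) (σ (sy + v)) = |u - v|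
        rw [hσd (sy + u) ⟨by linarith [hu.1, hsym.1], by linarith [hu.2, hszm.2]⟩
          (sy + v) ⟨by linarith [hv.1, hsym.1], by linarith [hv.2, hszm.2]⟩,
          show sy + u - (sy + v) = u - v by ring]
    have hs₀y : s₀ - sy ∈ Set.Icc (0:ℝ) (dist (cc 0) (cc n)) := by
      rw [hdyz]; exact ⟨by linarith, by linarith⟩
    set N := Nat.clog 2 n with hN
    have hn2N : n ≤ 2 ^ N := Nat.le_pow_clog one_lt_two n
    obtain ⟨i, hi, hclose⟩ :=
      chain_thin hL0 hgeo hhyp N n hn2N cc hedges _ hgσ' (s₀ - sy) hs₀y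
    have hclose' : dist p (cc i) ≤ δ * N + L := by
      have e : sy + (s₀ - sy) = s₀ := by ring
      simpa [e] using hclose
    have hkey : R - 1 ≤ δ * N + L := le_trans (hlow i hi) hclose'
    -- counting the chain
    have hn1 : 1 ≤ n := by omega
    have hyz : dist (σ sy) (σ sz) = sz - sy := by
      rw [hσd sy hsym sz hszm, abs_of_nonpos (by linarith), neg_sub]
    have hdγ : dist (γ t₁) (γ t₂) ≤ 6*R + 2 := by
      have h4 := dist_triangle4 (γ t₁) (σ sy) (σ sz) (γ t₂)
      have e1 : dist (γ t₁) (σ sy) = dist (σ sy) (γ t₁) := dist_comm _ _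
      have e2 : dist (σ sz) (γ t₂) = dist (γ t₂) (σ sz) := dist_comm _ _
      rw [e1, e2, hyz] at h4
      linarith
    have ht₁₂ : |t₂ - t₁| ≤ K * ((6*R+2) + ε) := by
      have h := (hqg t₁ ht₁ t₂ ht₂).1
      rw [abs_sub_comm t₁ t₂] at h
      have h2 : K⁻¹ * |t₂ - t₁| ≤ (6*R+2) + ε := by linarith
      calc |t₂ - t₁| = K * (K⁻¹ * |t₂ - t₁|) := by field_simp
        _ ≤ K * ((6*R+2) + ε) := mul_le_mul_of_nonneg_left h2 hK0.le
    have hcount : (n:ℝ) ≤ (6*K+2)*R + (K*(2+ε)+8) := by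
      have e : (n:ℝ) = (m₁:ℝ) + (m₂:ℝ) + (m₃:ℝ) := by rw [hn]; push_cast; ring
      rw [e]
      nlinarith [hm₁2, hm₂2, hm₃2, hℓ₁, hℓ₃, ht₁₂]
    have hNb : (N:ℝ) ≤ Real.logb 2 n + 1 := clog_le_logb n hn1
    have hnpos : (0:ℝ) < n := by exact_mod_cast hn1
    have hmono : Real.logb 2 (n:ℝ) ≤ Real.logb 2 ((6*K+2)*R + (K*(2+ε)+8)) :=
      Real.logb_le_logb_of_le one_lt_two hnpos hcount
    have hfin := hM R hMR.le
    have hmul : δ * N ≤ δ * (Real.logb 2 ((6*K+2)*R + (K*(2+ε)+8)) + 1) :=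
      mul_le_mul_of_nonneg_left (hNb.trans (by linarith)) hδ
    have hexp : δ * (Real.logb 2 ((6*K+2)*R + (K*(2+ε)+8)) + 1)
        = δ * Real.logb 2 ((6*K+2)*R + (K*(2+ε)+8)) + δ := by ring
    rw [hLdef] at hkey
    linarith [hfin, hkey, hmul, hexp.le, hexp.ge]
  -- conclude
  intro s hs
  have hfs : Metric.infDist (σ s) S < M + 1 := lt_of_le_of_lt ((hfR s hs).trans hRM) (by linarith)
  obtain ⟨q, ⟨t, ht, rfl⟩, hq⟩ := (Metric.infDist_lt_iff hSne).mp hfs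
  exact ⟨t, ht, hq.le⟩

set_option maxHeartbeats 1000000 in
/-- the Morse lemma. -/
theorem morse_lemma {X : Type*} [MetricSpace X] [ProperSpace X] {δ K ε : ℝ}
    (hδ : 0 ≤ δ) (hK : 1 ≤ K) (hε : 0 ≤ ε)
    (hgeo : GeodesicSpace X) (hhyp : DeltaHyperbolic X δ) :
    ∃ C : ℝ, 0 ≤ C ∧ ∀ (a b : ℝ) (γ σ : ℝ → X), a ≤ b →
      (∀ s ∈ Set.Icc a b, ∀ t ∈ Set.Icc a b,
        K⁻¹ * |s - t| - ε ≤ dist (γ s) (γ t) ∧ dist (γ s) (γ t) ≤ K * |s - t| + ε) →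
      GeodesicFromTo σ (γ a) (γ b) →
      (∀ t ∈ Set.Icc a b, ∃ s ∈ Set.Icc (0 : ℝ) (dist (γ a) (γ b)),
        dist (γ t) (σ s) ≤ C) ∧
      (∀ s ∈ Set.Icc (0 : ℝ) (dist (γ a) (γ b)), ∃ t ∈ Set.Icc a b,
        dist (σ s) (γ t) ≤ C) := by
  have hK0 : (0:ℝ) < K := lt_of_lt_of_le one_pos hK
  obtain ⟨M, hM0, hM⟩ :=
    exists_threshold δ (6*K+2) (K*(2+ε)+8) (δ + (K+ε+1) + 1) (by linarith)
  set C₂ : ℝ := M + 1 with hC₂def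
  have hC₂0 : 0 ≤ C₂ := by linarith
  set C₁ : ℝ := K*(K*(2*C₂+2+ε)) + ε + (C₂+1) with hC₁def
  have hC₁0 : 0 ≤ C₁ := by
    rw [hC₁def]
    have h1 : (0:ℝ) ≤ 2*C₂+2+ε := by linarith
    have h2 : (0:ℝ) ≤ K * (K*(2*C₂+2+ε)) := mul_nonneg hK0.le (mul_nonneg hK0.le h1)
    linarith
  refine ⟨max C₁ C₂, le_trans hC₂0 (le_max_right _ _), ?_⟩
  intro a b γ σ hab hqg hσg
  have hd0 : (0:ℝ) ≤ dist (γ a) (γ b) := dist_nonneg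
  have hpart2 : ∀ s ∈ Set.Icc (0:ℝ) (dist (γ a) (γ b)),
      ∃ t ∈ Set.Icc a b, dist (σ s) (γ t) ≤ C₂ :=
    geodesic_near_qg hδ hK hε hgeo hhyp hM a b γ σ hab hqg hσg
  constructor
  · -- the quasigeodesic is close to the geodesic
    intro t ht
    set S₁ : Set X := γ '' Set.Icc a t with hS₁
    set S₂ : Set X := γ '' Set.Icc t b with hS₂
    have hS₁ne : S₁.Nonempty := ⟨γ a, a, ⟨le_refl a, ht.1⟩, rfl⟩
    have hS₂ne : S₂.Nonempty := ⟨γ b, b, ⟨ht.2, le_refl b⟩, rfl⟩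
    have hσlip : LipschitzOnWith 1 σ (Set.Icc (0:ℝ) (dist (γ a) (γ b))) := by
      apply LipschitzOnWith.of_dist_le_mul
      intro x hx y hy
      rw [hσg.2.2 x hx y hy]
      simp [Real.dist_eq]
    set g : ℝ → ℝ := fun s => Metric.infDist (σ s) S₁ - Metric.infDist (σ s) S₂ with hg
    have hcont : ContinuousOn g (Set.Icc (0:ℝ) (dist (γ a) (γ b))) :=
      (((Metric.continuous_infDist_pt S₁).comp_continuousOn hσlip.continuousOn).sub
        ((Metric.continuous_infDist_pt S₂).comp_continuousOn hσlip.continuousOn))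
    have hg0 : g 0 ≤ 0 := by
      have h1 : Metric.infDist (σ 0) S₁ ≤ 0 := by
        rw [hσg.1]
        exact le_trans (Metric.infDist_le_dist_of_mem ⟨a, ⟨le_refl a, ht.1⟩, rfl⟩)
          (by rw [dist_self])
      have h2 : 0 ≤ Metric.infDist (σ 0) S₂ := Metric.infDist_nonneg
      simp only [hg]
      linarith
    have hgd : 0 ≤ g (dist (γ a) (γ b)) := by
      have h1 : Metric.infDist (σ (dist (γ a) (γ b))) S₂ ≤ 0 := by
        rw [hσg.2.1]
        exact le_trans (Metric.infDist_le_dist_of_mem ⟨b, ⟨ht.2, le_refl b⟩, rfl⟩)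
          (by rw [dist_self])
      have h2 : 0 ≤ Metric.infDist (σ (dist (γ a) (γ b))) S₁ := Metric.infDist_nonneg
      simp only [hg]
      linarith
    obtain ⟨s₀, hs₀, hgs₀⟩ := intermediate_value_Icc hd0 hcont ⟨hg0, hgd⟩
    have heq : Metric.infDist (σ s₀) S₁ = Metric.infDist (σ s₀) S₂ := by
      simp only [hg] at hgs₀
      linarith [hgs₀.le, hgs₀.ge]
    -- both infdists are at most C₂
    obtain ⟨t', ht', hdist'⟩ := hpart2 s₀ hs₀
    have hboth : Metric.infDist (σ s₀) S₁ ≤ C₂ ∧ Metric.infDist (σ s₀) S₂ ≤ C₂ := by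
      rcases le_total t' t with h | h
      · have h1 : Metric.infDist (σ s₀) S₁ ≤ C₂ :=
          le_trans (Metric.infDist_le_dist_of_mem ⟨t', ⟨ht'.1, h⟩, rfl⟩) hdist'
        exact ⟨h1, heq ▸ h1⟩
      · have h2 : Metric.infDist (σ s₀) S₂ ≤ C₂ :=
          le_trans (Metric.infDist_le_dist_of_mem ⟨t', ⟨h, ht'.2⟩, rfl⟩) hdist'
        exact ⟨heq ▸ h2, h2⟩
    obtain ⟨q₁, ⟨t₁, ht₁, rfl⟩, hq₁⟩ :=
      (Metric.infDist_lt_iff hS₁ne).mp (lt_of_le_of_lt hboth.1 (by linarith : C₂ < C₂ + 1))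
    obtain ⟨q₂, ⟨t₂, ht₂, rfl⟩, hq₂⟩ :=
      (Metric.infDist_lt_iff hS₂ne).mp (lt_of_le_of_lt hboth.2 (by linarith : C₂ < C₂ + 1))
    have ht₁ab : t₁ ∈ Set.Icc a b := ⟨ht₁.1, le_trans ht₁.2 ht.2⟩
    have ht₂ab : t₂ ∈ Set.Icc a b := ⟨le_trans ht.1 ht₂.1, ht₂.2⟩
    have hd12 : dist (γ t₁) (γ t₂) ≤ 2*C₂ + 2 := by
      have h3 := dist_triangle (γ t₁) (σ s₀) (γ t₂)
      rw [dist_comm (γ t₁) (σ s₀)] at h3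
      linarith
    have ht₁₂ : |t₁ - t₂| ≤ K * ((2*C₂+2) + ε) := by
      have h := (hqg t₁ ht₁ab t₂ ht₂ab).1
      have h2 : K⁻¹ * |t₁ - t₂| ≤ (2*C₂+2) + ε := by linarith
      calc |t₁ - t₂| = K * (K⁻¹ * |t₁ - t₂|) := by field_simp
        _ ≤ K * ((2*C₂+2) + ε) := mul_le_mul_of_nonneg_left h2 hK0.le
    have htt₁ : |t - t₁| ≤ K * ((2*C₂+2) + ε) := by
      refine le_trans ?_ ht₁₂
      rw [abs_of_nonneg (by linarith [ht₁.2] : (0:ℝ) ≤ t - t₁),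
        abs_of_nonpos (by linarith [ht₁.2, ht₂.1] : t₁ - t₂ ≤ 0)]
      linarith [ht₂.1]
    have hgtt₁ : dist (γ t) (γ t₁) ≤ K * (K * ((2*C₂+2) + ε)) + ε := by
      have h := (hqg t ht t₁ ht₁ab).2
      have := mul_le_mul_of_nonneg_left htt₁ hK0.le
      linarith
    refine ⟨s₀, hs₀, le_trans ?_ (le_max_left C₁ C₂)⟩
    have h4 := dist_triangle (γ t) (γ t₁) (σ s₀)
    rw [dist_comm (γ t₁) (σ s₀)] at h4
    rw [hC₁def]
    have : dist (γ t₁) (σ s₀) ≤ C₂ + 1 := by rw [dist_comm]; exact hq₁.le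
    nlinarith [hq₁.le]
  · intro s hs
    obtain ⟨t, ht, h⟩ := hpart2 s hs
    exact ⟨t, ht, h.trans (le_max_right _ _)⟩
end

section
/- (Cannon) Let G be a hyperbolic group with finite generating set S. If g, h ∈ G have the same (2δ+1)-level, then g and h have the same cone type: for every w ∈ G, w ∈ cone(g) if and only if w ∈ cone(h). In particular, a δ-hyperbolic group has only finitely many cone types. -/
/-- Word length of `g` with respect to a generating set `S` (words in `S ∪ S⁻¹`). -/
noncomputable def wordLength {G : Type*} [Group G] (S : Set G) (g : G) : ℕ :=
  sInf {n | ∃ w : List G, (∀ x ∈ w, x ∈ S ∨ x⁻¹ ∈ S) ∧ w.prod = g ∧ w.length = n}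

/-- A discrete geodesic of length `n` in the Cayley graph of `(G, S)`. -/
def DiscGeo {G : Type*} [Group G] (S : Set G) (c : ℕ → G) (n : ℕ) : Prop :=
  ∀ i ≤ n, ∀ j ≤ n, wordLength S ((c i)⁻¹ * c j) = Nat.dist i j

/-- The Cayley graph of `(G, S)` is δ-hyperbolic: all geodesic triangles are δ-thin
(each side lies in the δ-neighborhood of the union of the other two sides). -/
def CayleyHyperbolic {G : Type*} [Group G] (S : Set G) (δ : ℝ) : Prop :=
  ∀ (c₁ c₂ c₃ : ℕ → G) (n₁ n₂ n₃ : ℕ),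
    DiscGeo S c₁ n₁ → DiscGeo S c₂ n₂ → DiscGeo S c₃ n₃ →
    c₁ n₁ = c₂ 0 → c₂ n₂ = c₃ 0 → c₃ n₃ = c₁ 0 →
    ∀ i ≤ n₁, ∃ p : G, ((∃ j ≤ n₂, p = c₂ j) ∨ (∃ j ≤ n₃, p = c₃ j)) ∧
      (wordLength S ((c₁ i)⁻¹ * p) : ℝ) ≤ δ

/-- The cone type of `g`: elements `h` such that some geodesic from the identity to
`g * h` passes through `g`, i.e. `|g h| = |g| + |h|`. -/
noncomputable def coneType {G : Type*} [Group G] (S : Set G) (g : G) : Set G :=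
  {h | wordLength S (g * h) = wordLength S g + wordLength S h}

/-- The `r`-level of `g`: elements `h` of length at most `r` with `|g h| < |g|`. -/
noncomputable def level {G : Type*} [Group G] (S : Set G) (r : ℝ) (g : G) : Set G :=
  {h | (wordLength S h : ℝ) ≤ r ∧ wordLength S (g * h) < wordLength S g}

namespace CannonAux

variable {G : Type*} [Group G] {S : Set G}

/-- A word over the alphabet `S ∪ S⁻¹`. -/
def Ok (S : Set G) (w : List G) : Prop := ∀ x ∈ w, x ∈ S ∨ x⁻¹ ∈ S

lemma nat_dist_sub_sub (a i j : ℕ) : Nat.dist (a - i) (a - j) = Nat.dist i j ∨ ¬(i ≤ a ∧ j ≤ a) := by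
  by_cases h : i ≤ a ∧ j ≤ a
  · left
    have h1 : Nat.dist (a - i) (a - j) = (a - i - (a - j)) + (a - j - (a - i)) := rfl
    have h2 : Nat.dist i j = (i - j) + (j - i) := rfl
    omega
  · exact Or.inr h

lemma nat_dist_sub_sub' (a i j : ℕ) (hi : i ≤ a) (hj : j ≤ a) :
    Nat.dist (a - i) (a - j) = Nat.dist i j := by
  rcases nat_dist_sub_sub a i j with h | h
  · exact h
  · exact absurd ⟨hi, hj⟩ h

lemma nat_dist_zero_left (a : ℕ) : Nat.dist 0 a = a := by
  have h : Nat.dist 0 a = (0 - a) + (a - 0) := rfl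
  omega

lemma nat_dist_le_of_le (i m : ℕ) (h : i ≤ m) : Nat.dist i m = m - i := by
  have h1 : Nat.dist i m = (i - m) + (m - i) := rfl
  omega

lemma nat_dist_near (l k d : ℕ) (h1 : k ≤ (l - 1) + d) (h2 : l - 1 ≤ k + d) (hl : 1 ≤ l) :
    Nat.dist l k ≤ d + 1 := by
  have h3 : Nat.dist l k = (l - k) + (k - l) := rfl
  omega

lemma wl_le {w : List G} (hw : Ok S w) : wordLength S w.prod ≤ w.length :=
  Nat.sInf_le ⟨w, hw, rfl, rfl⟩

lemma wl_one : wordLength S (1 : G) = 0 := by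
  have h := wl_le (S := S) (w := []) (by intro x hx; simp at hx)
  simpa using h

lemma exists_geodesic_word (hgen : ∀ g : G, ∃ w : List G, Ok S w ∧ w.prod = g) (g : G) :
    ∃ w : List G, Ok S w ∧ w.prod = g ∧ w.length = wordLength S g := by
  obtain ⟨w, hw, hp⟩ := hgen g
  have hne : {n | ∃ w : List G, (∀ x ∈ w, x ∈ S ∨ x⁻¹ ∈ S) ∧ w.prod = g ∧ w.length = n}.Nonempty :=
    ⟨w.length, w, hw, hp, rfl⟩
  exact Nat.sInf_mem hne

lemma wl_mul (hgen : ∀ g : G, ∃ w : List G, Ok S w ∧ w.prod = g) (g h : G) :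
    wordLength S (g * h) ≤ wordLength S g + wordLength S h := by
  obtain ⟨w1, h1, p1, l1⟩ := exists_geodesic_word hgen g
  obtain ⟨w2, h2, p2, l2⟩ := exists_geodesic_word hgen h
  have hok : Ok S (w1 ++ w2) := by
    intro x hx
    rcases List.mem_append.mp hx with h | h
    exacts [h1 x h, h2 x h]
  have := wl_le hok
  simpa [List.prod_append, p1, p2, l1, l2] using this

lemma wl_inv (hgen : ∀ g : G, ∃ w : List G, Ok S w ∧ w.prod = g) (g : G) :
    wordLength S g⁻¹ = wordLength S g := by
  have key : ∀ a : G, wordLength S a⁻¹ ≤ wordLength S a := by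
    intro a
    obtain ⟨w, hw, hp, hl⟩ := exists_geodesic_word hgen a
    have hok : Ok S ((w.map fun x => x⁻¹).reverse) := by
      intro x hx
      simp only [List.mem_reverse, List.mem_map] at hx
      obtain ⟨y, hy, rfl⟩ := hx
      rcases hw y hy with h | h
      · exact Or.inr (by simpa using h)
      · exact Or.inl h
    have h2 := wl_le hok
    rw [← List.prod_inv_reverse, hp] at h2
    simpa [hl] using h2
  exact le_antisymm (key g) (by simpa using key g⁻¹)

lemma wl_eq_zero (hgen : ∀ g : G, ∃ w : List G, Ok S w ∧ w.prod = g) {g : G}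
    (h : wordLength S g = 0) : g = 1 := by
  obtain ⟨w, hw, hp, hl⟩ := exists_geodesic_word hgen g
  rw [h] at hl
  have : w = [] := List.length_eq_zero_iff.mp hl
  rw [this] at hp
  simpa using hp.symm

lemma wl_tri (hgen : ∀ g : G, ∃ w : List G, Ok S w ∧ w.prod = g) (a b c : G) :
    wordLength S (a⁻¹ * c) ≤ wordLength S (a⁻¹ * b) + wordLength S (b⁻¹ * c) := by
  have := wl_mul hgen (a⁻¹ * b) (b⁻¹ * c)
  simpa [mul_assoc] using this

lemma wl_symm (hgen : ∀ g : G, ∃ w : List G, Ok S w ∧ w.prod = g) (a b : G) :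
    wordLength S (a⁻¹ * b) = wordLength S (b⁻¹ * a) := by
  rw [← wl_inv hgen (a⁻¹ * b)]
  simp [mul_inv_rev]

lemma geodesic_word_path (hgen : ∀ g : G, ∃ w : List G, Ok S w ∧ w.prod = g)
    {w : List G} (hw : Ok S w) (hlen : w.length = wordLength S w.prod) :
    DiscGeo S (fun i => (w.take i).prod) w.length := by
  have upper : ∀ i j : ℕ, i ≤ j →
      wordLength S ((w.take i).prod⁻¹ * (w.take j).prod) ≤ j - i := by
    intro i j hij
    have h1 : (w.take j).take i = w.take i := by
      rw [List.take_take, min_eq_left hij]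
    have hsplit : w.take j = w.take i ++ (w.take j).drop i := by
      conv_lhs => rw [← List.take_append_drop i (w.take j)]
      rw [h1]
    have hprod : (w.take i).prod⁻¹ * (w.take j).prod = ((w.take j).drop i).prod := by
      conv_lhs => rw [hsplit]
      rw [List.prod_append, inv_mul_cancel_left]
    have hok : Ok S ((w.take j).drop i) := by
      intro x hx
      exact hw x (List.mem_of_mem_take (List.mem_of_mem_drop hx))
    have := wl_le hok
    rw [← hprod] at this
    refine le_trans this ?_
    simp only [List.length_drop, List.length_take]
    omega
  have hD0 : ∀ i : ℕ, wordLength S (w.take i).prod ≤ i := by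
    intro i
    have hok : Ok S (w.take i) := fun x hx => hw x (List.mem_of_mem_take hx)
    refine le_trans (wl_le hok) ?_
    simp [List.length_take]
  have hDend : ∀ j : ℕ, j ≤ w.length →
      wordLength S ((w.take j).prod⁻¹ * w.prod) ≤ w.length - j := by
    intro j hj
    have := upper j w.length hj
    rwa [List.take_length] at this
  have exact_ : ∀ i j : ℕ, i ≤ j → j ≤ w.length →
      wordLength S ((w.take i).prod⁻¹ * (w.take j).prod) = j - i := by
    intro i j hij hj
    refine le_antisymm (upper i j hij) ?_
    by_contra hlt
    push_neg at hlt
    have t1 : wordLength S w.prod ≤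
        wordLength S (w.take i).prod + wordLength S ((w.take i).prod⁻¹ * w.prod) := by
      have := wl_mul hgen (w.take i).prod ((w.take i).prod⁻¹ * w.prod)
      simpa using this
    have t2 := wl_tri hgen (w.take i).prod (w.take j).prod w.prod
    have t3 := hDend j hj
    have t4 := hD0 i
    omega
  intro i hi j hj
  rcases le_total i j with h | h
  · rw [exact_ i j h hj]
    have : Nat.dist i j = (i - j) + (j - i) := rfl
    omega
  · rw [wl_symm hgen, exact_ j i h hi]
    have : Nat.dist i j = (i - j) + (j - i) := rfl
    omega

/-- Main induction: equal levels transfer cone membership. -/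
lemma cone_of_level (hgen : ∀ g : G, ∃ w : List G, Ok S w ∧ w.prod = g)
    {δ : ℝ} (hδ : 0 ≤ δ) (hhyp : CayleyHyperbolic S δ)
    (g₁ g₂ : G) (hlev : level S (2 * δ + 1) g₁ = level S (2 * δ + 1) g₂) :
    ∀ n (w : G), wordLength S w ≤ n → w ∈ coneType S g₁ → w ∈ coneType S g₂ := by
  intro n
  induction n with
  | zero =>
    intro w hw _
    have hw1 : w = 1 := wl_eq_zero hgen (Nat.le_zero.mp hw)
    subst hw1
    show wordLength S (g₂ * 1) = wordLength S g₂ + wordLength S 1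
    simp [wl_one]
  | succ n ih =>
    intro w hwn hc
    rcases Nat.lt_or_ge (wordLength S w) (n + 1) with h | h
    · exact ih w (by omega) hc
    have hwlen : wordLength S w = n + 1 := le_antisymm hwn h
    have hc1 : wordLength S (g₁ * w) = wordLength S g₁ + (n + 1) := by
      have := hc
      simp only [coneType, Set.mem_setOf_eq] at this
      rw [this, hwlen]
    -- decompose w = u * s
    obtain ⟨ww, hok, hprod, hlenw⟩ := exists_geodesic_word hgen w
    rw [hwlen] at hlenw
    have hne : ww ≠ [] := by
      intro hnil
      rw [hnil] at hlenw
      simp at hlenw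
    set u := ww.dropLast.prod with hu_def
    set s := ww.getLast hne with hs_def
    have hws : w = u * s := by
      rw [← hprod]
      conv_lhs => rw [← List.dropLast_append_getLast hne]
      rw [List.prod_append]
      simp
      rfl
    have hoku : Ok S ww.dropLast := fun x hx => hok x (List.mem_of_mem_dropLast hx)
    have hsok : s ∈ S ∨ s⁻¹ ∈ S := hok s (List.getLast_mem hne)
    have hu_le : wordLength S u ≤ n := by
      refine le_trans (wl_le hoku) ?_
      rw [List.length_dropLast]
      omega
    have hs_le : wordLength S s ≤ 1 := by
      have hok1 : Ok S [s] := by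
        intro x hx
        rw [List.mem_singleton] at hx
        subst hx
        exact hsok
      have := wl_le hok1
      simpa using this
    have hmulus : wordLength S w ≤ wordLength S u + wordLength S s := by
      rw [hws]; exact wl_mul hgen u s
    have hu : wordLength S u = n := by omega
    have hs1 : wordLength S s = 1 := by omega
    -- u ∈ cone g₁
    have hcu1 : wordLength S (g₁ * u) = wordLength S g₁ + n := by
      have hup : wordLength S (g₁ * u) ≤ wordLength S g₁ + n := by
        have := wl_mul hgen g₁ u; omega
      have hdn : wordLength S (g₁ * w) ≤ wordLength S (g₁ * u) + wordLength S s := by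
        have := wl_mul hgen (g₁ * u) s
        rw [mul_assoc, ← hws] at this
        exact this
      omega
    have hcu2 : wordLength S (g₂ * u) = wordLength S g₂ + n := by
      have := ih u (by omega) (by show wordLength S (g₁ * u) = _; rw [hu]; exact hcu1)
      simp only [coneType, Set.mem_setOf_eq] at this
      rw [this, hu]
    set ℓ := wordLength S g₂ with hℓ_def
    rcases Nat.eq_zero_or_pos ℓ with hℓ0 | hℓpos
    · have hg2 : g₂ = 1 := wl_eq_zero hgen hℓ0
      subst hg2
      show wordLength S (1 * w) = wordLength S 1 + wordLength S w
      simp [wl_one]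
    show wordLength S (g₂ * w) = ℓ + wordLength S w
    rw [hwlen]
    by_contra hne2
    set m := wordLength S (g₂ * w) with hm_def
    have hm_le : m ≤ ℓ + n := by
      have := wl_mul hgen g₂ w
      omega
    have hm_ge : ℓ + n ≤ m + 1 := by
      have e : g₂ * w * s⁻¹ = g₂ * u := by rw [hws]; group
      have h1 := wl_mul hgen (g₂ * w) s⁻¹
      rw [e, wl_inv hgen, hs1] at h1
      omega
    -- geodesic σ through g₂ to g₂ u
    obtain ⟨w2, hok2, hp2, hl2⟩ := exists_geodesic_word hgen g₂
    obtain ⟨wu, hoku', hpu, hlu⟩ := exists_geodesic_word hgen u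
    rw [hu] at hlu
    set σ : ℕ → G := fun i => ((w2 ++ wu).take i).prod with hσ_def
    have hokc : Ok S (w2 ++ wu) := by
      intro x hx
      rcases List.mem_append.mp hx with h' | h'
      exacts [hok2 x h', hoku' x h']
    have hclen : (w2 ++ wu).length = wordLength S (w2 ++ wu).prod := by
      rw [List.length_append, List.prod_append, hp2, hpu, hcu2, hl2, hlu]
    have hσ : DiscGeo S σ (ℓ + n) := by
      have := geodesic_word_path hgen hokc hclen
      rwa [List.length_append, hl2, hlu] at this
    have hσ0 : σ 0 = 1 := by simp [hσ_def]
    have hσℓ : σ ℓ = g₂ := by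
      show ((w2 ++ wu).take ℓ).prod = g₂
      rw [List.take_left' hl2, hp2]
    have hσL : σ (ℓ + n) = g₂ * u := by
      show ((w2 ++ wu).take (ℓ + n)).prod = g₂ * u
      have e : ℓ + n = (w2 ++ wu).length := by
        rw [List.length_append, hl2, hlu, hℓ_def]
      rw [e, List.take_length, List.prod_append, hp2, hpu]
    -- geodesic γ to g₂ w
    obtain ⟨wv, hokv, hpv, hlv⟩ := exists_geodesic_word hgen (g₂ * w)
    set γ : ℕ → G := fun i => (wv.take i).prod with hγ_def
    have hγ : DiscGeo S γ m := by
      have h0 := geodesic_word_path hgen hokv (by rw [hpv]; exact hlv)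
      rw [hlv, ← hm_def] at h0
      exact h0
    have hγ0 : γ 0 = 1 := by simp [hγ_def]
    have hγm : γ m = g₂ * w := by
      show (wv.take m).prod = g₂ * w
      have e : m = wv.length := by rw [hlv, ← hm_def]
      rw [e, List.take_length, hpv]
    -- the edge and reversed σ
    set c₂ : ℕ → G := fun i => if i = 0 then g₂ * w else g₂ * u with hc₂_def
    have hwsinv : (g₂ * w)⁻¹ * (g₂ * u) = s⁻¹ := by
      rw [hws]; group
    have husinv : (g₂ * u)⁻¹ * (g₂ * w) = s := by
      rw [hws]; group
    have w00 : wordLength S ((g₂ * w)⁻¹ * (g₂ * w)) = 0 := by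
      rw [inv_mul_cancel]; exact wl_one
    have w11 : wordLength S ((g₂ * u)⁻¹ * (g₂ * u)) = 0 := by
      rw [inv_mul_cancel]; exact wl_one
    have w01 : wordLength S ((g₂ * w)⁻¹ * (g₂ * u)) = 1 := by
      rw [hwsinv, wl_inv hgen]; exact hs1
    have w10 : wordLength S ((g₂ * u)⁻¹ * (g₂ * w)) = 1 := by
      rw [husinv]; exact hs1
    have hc₂ : DiscGeo S c₂ 1 := by
      intro i hi j hj
      interval_cases i <;> interval_cases j
      · show wordLength S ((g₂ * w)⁻¹ * (g₂ * w)) = Nat.dist 0 0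
        rw [w00]; rfl
      · show wordLength S ((g₂ * w)⁻¹ * (g₂ * u)) = Nat.dist 0 1
        rw [w01]; rfl
      · show wordLength S ((g₂ * u)⁻¹ * (g₂ * w)) = Nat.dist 1 0
        rw [w10]; rfl
      · show wordLength S ((g₂ * u)⁻¹ * (g₂ * u)) = Nat.dist 1 1
        rw [w11]; rfl
    set c₃ : ℕ → G := fun i => σ (ℓ + n - i) with hc₃_def
    have hc₃ : DiscGeo S c₃ (ℓ + n) := by
      intro i hi j hj
      have h0 := hσ (ℓ + n - i) (by omega) (ℓ + n - j) (by omega)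
      rw [nat_dist_sub_sub' (ℓ + n) i j hi hj] at h0
      exact h0
    -- apply hyperbolicity at the point γ (ℓ - 1)
    have hℓ1m : ℓ - 1 ≤ m := by omega
    have happ := hhyp γ c₂ c₃ m 1 (ℓ + n) hγ hc₂ hc₃
      (by show γ m = g₂ * w; exact hγm)
      (by show g₂ * u = σ (ℓ + n - 0); rw [Nat.sub_zero, hσL])
      (by show σ (ℓ + n - (ℓ + n)) = γ 0; rw [Nat.sub_self, hσ0, hγ0])
      (ℓ - 1) hℓ1m
    obtain ⟨p, hp, hpd⟩ := happ
    have hp2 : (p = g₂ * w ∨ p = g₂ * u) ∨ ∃ k ≤ ℓ + n, p = σ k := by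
      rcases hp with ⟨j, hj, rfl⟩ | ⟨j, hj, rfl⟩
      · interval_cases j
        · exact Or.inl (Or.inl rfl)
        · exact Or.inl (Or.inr rfl)
      · exact Or.inr ⟨ℓ + n - j, by omega, rfl⟩
    clear hp
    clear_value u s σ γ c₂ c₃ ℓ m
    set q := γ (ℓ - 1) with hq_def
    clear_value q
    have hq_wl : wordLength S q = ℓ - 1 := by
      have h0 := hγ 0 (Nat.zero_le _) (ℓ - 1) hℓ1m
      rw [hγ0, ← hq_def] at h0
      rw [nat_dist_zero_left] at h0
      simpa using h0
    have hqv : wordLength S (q⁻¹ * (g₂ * w)) = m - (ℓ - 1) := by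
      have h0 := hγ (ℓ - 1) hℓ1m m le_rfl
      rw [hγm, ← hq_def] at h0
      rw [nat_dist_le_of_le _ _ hℓ1m] at h0
      exact h0
    -- key bound : |g₂⁻¹ q| ≤ 2δ + 1
    have hx_small : (wordLength S (g₂⁻¹ * q) : ℝ) ≤ 2 * δ + 1 := by
      rcases hp2 with (rfl | rfl) | ⟨k, hk, rfl⟩
      · -- p = g₂ * w
        rw [hqv] at hpd
        have hn : ((n : ℝ)) ≤ δ := by
          have h1 : (n : ℕ) ≤ m - (ℓ - 1) := by omega
          calc ((n : ℝ)) ≤ ((m - (ℓ - 1) : ℕ) : ℝ) := by exact_mod_cast h1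
            _ ≤ δ := hpd
        have hb : wordLength S (g₂⁻¹ * q) ≤ (n + 1) + (m - (ℓ - 1)) := by
          have t := wl_tri hgen g₂ (g₂ * w) q
          have e1 : g₂⁻¹ * (g₂ * w) = w := by group
          rw [e1] at t
          have e2 : wordLength S ((g₂ * w)⁻¹ * q) = m - (ℓ - 1) := by
            rw [wl_symm hgen, hqv]
          rw [e2, hwlen] at t
          exact t
        calc (wordLength S (g₂⁻¹ * q) : ℝ) ≤ ((n + 1) + (m - (ℓ - 1)) : ℕ) := by exact_mod_cast hb
          _ = (n : ℝ) + 1 + ((m - (ℓ - 1) : ℕ) : ℝ) := by push_cast; ring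
          _ ≤ δ + 1 + δ := by linarith
          _ = 2 * δ + 1 := by ring
      · -- p = g₂ * u
        have hdge : ℓ + n ≤ (ℓ - 1) + wordLength S (q⁻¹ * (g₂ * u)) := by
          have t := wl_tri hgen (1 : G) q (g₂ * u)
          simp only [inv_one, one_mul] at t
          rw [hq_wl, hcu2] at t
          exact t
        have hb : wordLength S (g₂⁻¹ * q) ≤ n + wordLength S (q⁻¹ * (g₂ * u)) := by
          have t := wl_tri hgen g₂ (g₂ * u) q
          have e1 : g₂⁻¹ * (g₂ * u) = u := by group
          rw [e1, hu] at t
          rw [wl_symm hgen (g₂ * u) q] at t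
          exact t
        set d := wordLength S (q⁻¹ * (g₂ * u)) with hd_def
        have hnd : (n : ℝ) + 1 ≤ (d : ℕ) := by
          have h' : n + 1 ≤ d := by omega
          exact_mod_cast h'
        calc (wordLength S (g₂⁻¹ * q) : ℝ) ≤ ((n + d : ℕ) : ℝ) := by exact_mod_cast hb
          _ = (n : ℝ) + (d : ℝ) := by push_cast; ring
          _ ≤ (δ - 1) + δ := by linarith [hpd]
          _ ≤ 2 * δ + 1 := by linarith
      · -- p = σ k
        have hσk : wordLength S (σ k) = k := by
          have h0 := hσ 0 (Nat.zero_le _) k hk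
          rw [hσ0] at h0
          rw [nat_dist_zero_left] at h0
          simpa using h0
        have h1 : k ≤ (ℓ - 1) + wordLength S (q⁻¹ * σ k) := by
          have t := wl_tri hgen (1 : G) q (σ k)
          simp only [inv_one, one_mul] at t
          rw [hq_wl, hσk] at t
          exact t
        have h2 : ℓ - 1 ≤ k + wordLength S (q⁻¹ * σ k) := by
          have t := wl_tri hgen (1 : G) (σ k) q
          simp only [inv_one, one_mul] at t
          rw [hq_wl, hσk, wl_symm hgen (σ k) q] at t
          exact t
        have hb : wordLength S (g₂⁻¹ * q) ≤ Nat.dist ℓ k + wordLength S (q⁻¹ * σ k) := by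
          have t := wl_tri hgen g₂ (σ k) q
          have e1 : wordLength S (g₂⁻¹ * σ k) = Nat.dist ℓ k := by
            have h0 := hσ ℓ (by omega) k hk
            rwa [hσℓ] at h0
          rw [e1, wl_symm hgen (σ k) q] at t
          exact t
        set d := wordLength S (q⁻¹ * σ k) with hd_def
        have hdist : Nat.dist ℓ k ≤ d + 1 := nat_dist_near ℓ k d h1 h2 hℓpos
        have hb2 : wordLength S (g₂⁻¹ * q) ≤ 2 * d + 1 := by omega
        calc (wordLength S (g₂⁻¹ * q) : ℝ) ≤ ((2 * d + 1 : ℕ) : ℝ) := by exact_mod_cast hb2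
          _ = 2 * (d : ℝ) + 1 := by push_cast; ring
          _ ≤ 2 * δ + 1 := by linarith [hpd]
    -- x is in the level of g₂, hence of g₁
    have hx_lev : g₂⁻¹ * q ∈ level S (2 * δ + 1) g₂ := by
      refine ⟨hx_small, ?_⟩
      have e : g₂ * (g₂⁻¹ * q) = q := by group
      rw [e, hq_wl]
      omega
    rw [← hlev] at hx_lev
    obtain ⟨-, hx2⟩ := hx_lev
    have hfinal : wordLength S (g₁ * w) ≤
        wordLength S (g₁ * (g₂⁻¹ * q)) + wordLength S (q⁻¹ * (g₂ * w)) := by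
      have t := wl_mul hgen (g₁ * (g₂⁻¹ * q)) (q⁻¹ * (g₂ * w))
      have e : g₁ * (g₂⁻¹ * q) * (q⁻¹ * (g₂ * w)) = g₁ * w := by group
      rw [e] at t
      exact t
    rw [hqv] at hfinal
    omega

lemma lists_finite (T : Set G) (hT : T.Finite) (N : ℕ) :
    {l : List G | (∀ x ∈ l, x ∈ T) ∧ l.length ≤ N}.Finite := by
  induction N with
  | zero =>
    apply Set.Finite.subset (Set.finite_singleton ([] : List G))
    rintro l ⟨-, hl⟩
    simp [List.length_eq_zero_iff.mp (Nat.le_zero.mp hl)]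
  | succ N ihN =>
    apply Set.Finite.subset (Set.Finite.insert [] ((hT.prod ihN).image fun p => p.1 :: p.2))
    rintro l ⟨h1, h2⟩
    cases l with
    | nil => exact Set.mem_insert _ _
    | cons a l =>
      refine Set.mem_insert_of_mem _ ⟨(a, l), ⟨h1 a (by simp), ?_, ?_⟩, rfl⟩
      · intro x hx; exact h1 x (by simp [hx])
      · simpa using h2

lemma ball_finite (hSfin : S.Finite) (hgen : ∀ g : G, ∃ w : List G, Ok S w ∧ w.prod = g)
    (N : ℕ) : {g : G | wordLength S g ≤ N}.Finite := by
  have hT : (S ∪ S⁻¹).Finite := hSfin.union hSfin.inv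
  apply Set.Finite.subset ((lists_finite _ hT N).image List.prod)
  intro g hg
  have hg' : wordLength S g ≤ N := hg
  obtain ⟨w, hok, hp, hl⟩ := exists_geodesic_word hgen g
  refine ⟨w, ⟨?_, by omega⟩, hp⟩
  intro x hx
  rcases hok x hx with h | h
  · exact Or.inl h
  · exact Or.inr (Set.mem_inv.mpr h)

end CannonAux

/-- Cannon's lemma: the (2δ+1)-level of an element of a hyperbolic
group determines its cone type; in particular there are only finitely many
cone types. -/
theorem cannon_cone_types {G : Type*} [Group G] (S : Set G)
    (hSfin : S.Finite) (hSgen : Subgroup.closure S = ⊤)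
    (δ : ℝ) (hδ : 0 ≤ δ) (hhyp : CayleyHyperbolic S δ) :
    (∀ g h : G, level S (2 * δ + 1) g = level S (2 * δ + 1) h →
      coneType S g = coneType S h) ∧
    {C : Set G | ∃ g : G, C = coneType S g}.Finite := by
  classical
  have hgen : ∀ g : G, ∃ w : List G, CannonAux.Ok S w ∧ w.prod = g := by
    intro g
    have hg : g ∈ Subgroup.closure S := hSgen ▸ Subgroup.mem_top g
    induction hg using Subgroup.closure_induction with
    | mem x hx => exact ⟨[x], by intro y hy; simp at hy; subst hy; exact Or.inl hx, by simp⟩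
    | one => exact ⟨[], by intro y hy; simp at hy, by simp⟩
    | mul x y _ _ hx hy =>
      obtain ⟨w1, h1, p1⟩ := hx
      obtain ⟨w2, h2, p2⟩ := hy
      refine ⟨w1 ++ w2, ?_, by rw [List.prod_append, p1, p2]⟩
      intro z hz
      rcases List.mem_append.mp hz with h | h
      exacts [h1 z h, h2 z h]
    | inv x _ hx =>
      obtain ⟨w, h1, p1⟩ := hx
      refine ⟨(w.map fun a => a⁻¹).reverse, ?_, by rw [← List.prod_inv_reverse, p1]⟩
      intro z hz
      simp only [List.mem_reverse, List.mem_map] at hz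
      obtain ⟨y, hy, rfl⟩ := hz
      rcases h1 y hy with h | h
      · exact Or.inr (by simpa using h)
      · exact Or.inl h
  have part1 : ∀ g h : G, level S (2 * δ + 1) g = level S (2 * δ + 1) h →
      coneType S g = coneType S h := by
    intro g h hl
    ext w
    constructor
    · intro hw
      exact CannonAux.cone_of_level hgen hδ hhyp g h hl (wordLength S w) w le_rfl hw
    · intro hw
      exact CannonAux.cone_of_level hgen hδ hhyp h g hl.symm (wordLength S w) w le_rfl hw
  refine ⟨part1, ?_⟩
  set r : ℝ := 2 * δ + 1 with hr_def
  have hball : {x : G | (wordLength S x : ℝ) ≤ r}.Finite := by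
    apply (CannonAux.ball_finite hSfin hgen ⌈r⌉₊).subset
    intro x hx
    have : (wordLength S x : ℝ) ≤ (⌈r⌉₊ : ℝ) := le_trans hx (Nat.le_ceil r)
    exact_mod_cast this
  have hlevfin : (Set.range (level S r)).Finite := by
    apply hball.finite_subsets.subset
    rintro A ⟨g, rfl⟩
    intro x hx
    exact hx.1
  set f : Set G → Set G := fun A =>
    if h : ∃ g, level S r g = A then coneType S h.choose else ∅ with hf_def
  apply (hlevfin.image f).subset
  rintro C ⟨g, rfl⟩
  refine ⟨level S r g, ⟨g, rfl⟩, ?_⟩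
  have hex : ∃ g', level S r g' = level S r g := ⟨g, rfl⟩
  simp only [hf_def, dif_pos hex]
  exact part1 _ _ hex.choose_spec
end
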